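/- For the triangle-plus-center configuration with central mass m > 0, the three nontrivial double eigenvalues λ₃, λ₄, λ₅ of the Hessian of √(2I)U satisfy the cubic λ³ − f₁(m)λ² + f₂(m)λ − f₃(m) = 0, where f₁(m) = (1/2)(2√3 m² + (9√3+2)m + 5), f₂(m) = (1/2)(18m³ + (11√3 − 18)m² + (15√3+5)m + 3), and f₃(m) = (45/4 − 27√3/2)m³ + (21√3/4 − 27/4)m² + (3/2 + 9√3/4)m. -/

import Mathlib

open Matrix Polynomial

/-- `√3`. -/
noncomputable def s3 : ℝ := Real.sqrt 3

/-- The Hessian `H₂` of `√(2I)·U` at the triangle-plus-center central configuration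
`z₀ = (1,0,-1/2,√3/2,-1/2,-√3/2,0,0)`, with three unit masses and central mass `m`. -/
noncomputable def H2 (m : ℝ) : Matrix (Fin 8) (Fin 8) ℝ :=
  !![5/6+2*s3*m, 0, 1/12+s3*m/2, -s3/4-3*m/2, 1/12+s3*m/2, s3/4+3*m/2, -2*s3*m, 0;
     0, 5/6, s3/4, 1/12, -s3/4, 1/12, 0, s3*m;
     1/12+s3*m/2, s3/4, 5/6+s3*m/2, -3*m/2, 1/12-s3*m/4, -s3/4-3*m/4, s3*m/4, 9*m/4;
     -s3/4-3*m/2, 1/12, -3*m/2, 5/6+3*s3*m/2, s3/4+3*m/4, 1/12+3*s3*m/4, 9*m/4, -5*s3*m/4;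
     1/12+s3*m/2, -s3/4, 1/12-s3*m/4, s3/4+3*m/4, 5/6+s3*m/2, 3*m/2, s3*m/4, -9*m/4;
     s3/4+3*m/2, 1/12, -s3/4-3*m/4, 1/12+3*s3*m/4, 3*m/2, 5/6+3*s3*m/2, -9*m/4, -5*s3*m/4;
     -2*s3*m, 0, s3*m/4, 9*m/4, s3*m/4, -9*m/4, s3*(2*m^2+3*m)/2+m, 0;
     0, s3*m, 9*m/4, -5*s3*m/4, -9*m/4, -5*s3*m/4, 0, s3*(2*m^2+3*m)/2+m]

noncomputable def f₁ (m : ℝ) : ℝ := (1/2)*(2*s3*m^2 + (9*s3+2)*m + 5)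

noncomputable def f₂ (m : ℝ) : ℝ := (1/2)*(18*m^3 + (11*s3-18)*m^2 + (15*s3+5)*m + 3)

noncomputable def f₃ (m : ℝ) : ℝ :=
  (45/4 - 27*s3/2)*m^3 + (21*s3/4 - 27/4)*m^2 + (3/2 + 9*s3/4)*m

/-!
The configuration is invariant under the reflection `(x, y) ↦ (x, -y)` combined with the swap
of bodies 2 and 3, so `H₂` commutes with the induced involution of `ℝ⁸`. In a basis of its `±1`
eigenspaces `H₂` becomes block diagonal with two `4 × 4` blocks, and a direct expansion shows
that both blocks have characteristic polynomial `X · (X³ - f₁ X² + f₂ X - f₃)`.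
-/

lemma s3_sq : s3 ^ 2 = 3 := Real.sq_sqrt (by norm_num)

lemma s3_pow_three : s3 ^ 3 = 3 * s3 := by rw [pow_succ, s3_sq]

lemma s3_pow_four : s3 ^ 4 = 9 := by
  rw [show 4 = 2 * 2 from rfl, pow_mul, s3_sq]
  norm_num

namespace Matrix

theorem det_fin_four {R : Type*} [CommRing R] (A : Matrix (Fin 4) (Fin 4) R) :
    A.det =
      A 0 0 * A 1 1 * A 2 2 * A 3 3 - A 0 0 * A 1 1 * A 2 3 * A 3 2 - A 0 0 * A 1 2 * A 2 1 * A 3 3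
      + A 0 0 * A 1 2 * A 2 3 * A 3 1 + A 0 0 * A 1 3 * A 2 1 * A 3 2 - A 0 0 * A 1 3 * A 2 2 * A 3 1
      - A 0 1 * A 1 0 * A 2 2 * A 3 3 + A 0 1 * A 1 0 * A 2 3 * A 3 2 + A 0 1 * A 1 2 * A 2 0 * A 3 3
      - A 0 1 * A 1 2 * A 2 3 * A 3 0 - A 0 1 * A 1 3 * A 2 0 * A 3 2 + A 0 1 * A 1 3 * A 2 2 * A 3 0
      + A 0 2 * A 1 0 * A 2 1 * A 3 3 - A 0 2 * A 1 0 * A 2 3 * A 3 1 - A 0 2 * A 1 1 * A 2 0 * A 3 3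
      + A 0 2 * A 1 1 * A 2 3 * A 3 0 + A 0 2 * A 1 3 * A 2 0 * A 3 1 - A 0 2 * A 1 3 * A 2 1 * A 3 0
      - A 0 3 * A 1 0 * A 2 1 * A 3 2 + A 0 3 * A 1 0 * A 2 2 * A 3 1 + A 0 3 * A 1 1 * A 2 0 * A 3 2
      - A 0 3 * A 1 1 * A 2 2 * A 3 0 - A 0 3 * A 1 2 * A 2 0 * A 3 1 + A 0 3 * A 1 2 * A 2 1 * A 3 0 := by
  rw [det_succ_row_zero, Fin.sum_univ_four]
  simp only [det_fin_three, submatrix_apply, Fin.succAbove, Fin.reduceSucc, Fin.reduceCastSucc,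
    Fin.reduceLT, ↓reduceIte, Fin.isValue, Fin.coe_ofNat_eq_mod]
  ring

theorem charpoly_eq_of_mul_eq_mul {n R : Type*} [Fintype n] [DecidableEq n] [CommRing R]
    {A D P Q : Matrix n n R} (hPQ : P * Q = 1) (hAP : A * P = P * D) :
    A.charpoly = D.charpoly := by
  have hD : D = Q * A * P := by
    rw [mul_assoc, hAP, ← mul_assoc, mul_eq_one_comm.mp hPQ, one_mul]
  rw [hD, charpoly_mul_comm, ← mul_assoc, hPQ, one_mul]

end Matrix

/-- Columns `0–3`: the invariant vectors `e(x₁)`, `e(x₂) + e(x₃)`, `e(y₂) - e(y₃)`, `e(x₄)`;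
columns `4–7`: the anti-invariant vectors `e(y₁)`, `e(x₂) - e(x₃)`, `e(y₂) + e(y₃)`, `e(y₄)`. -/
def reflectionBasis : Matrix (Fin 8) (Fin 8) ℝ :=
  !![1, 0, 0, 0, 0, 0, 0, 0;
     0, 0, 0, 0, 1, 0, 0, 0;
     0, 1, 0, 0, 0, 1, 0, 0;
     0, 0, 1, 0, 0, 0, 1, 0;
     0, 1, 0, 0, 0, -1, 0, 0;
     0, 0, -1, 0, 0, 0, 1, 0;
     0, 0, 0, 1, 0, 0, 0, 0;
     0, 0, 0, 0, 0, 0, 0, 1]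

noncomputable def reflectionBasisInv : Matrix (Fin 8) (Fin 8) ℝ :=
  !![1, 0, 0, 0, 0, 0, 0, 0;
     0, 0, 1/2, 0, 1/2, 0, 0, 0;
     0, 0, 0, 1/2, 0, -1/2, 0, 0;
     0, 0, 0, 0, 0, 0, 1, 0;
     0, 1, 0, 0, 0, 0, 0, 0;
     0, 0, 1/2, 0, -1/2, 0, 0, 0;
     0, 0, 0, 1/2, 0, 1/2, 0, 0;
     0, 0, 0, 0, 0, 0, 0, 1]

noncomputable def symBlock (m : ℝ) : Matrix (Fin 4) (Fin 4) ℝ :=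
  !![5/6+2*s3*m, 1/6+s3*m, -s3/2-3*m, -2*s3*m;
     1/12+s3*m/2, 11/12+s3*m/4, s3/4-3*m/4, s3*m/4;
     -s3/4-3*m/2, s3/4-3*m/4, 3/4+3*s3*m/4, 9*m/4;
     -2*s3*m, s3*m/2, 9*m/2, m+3*s3*m/2+s3*m^2]

noncomputable def antisymBlock (m : ℝ) : Matrix (Fin 4) (Fin 4) ℝ :=
  !![5/6, s3/2, 1/6, s3*m;
     s3/4, 3/4+3*s3*m/4, -s3/4-9*m/4, 9*m/4;
     1/12, -s3/4-9*m/4, 11/12+9*s3*m/4, -5*s3*m/4;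
     s3*m, 9*m/2, -5*s3*m/2, m+3*s3*m/2+s3*m^2]

noncomputable def H2BlockDiag (m : ℝ) : Matrix (Fin 8) (Fin 8) ℝ :=
  !![5/6+2*s3*m, 1/6+s3*m, -s3/2-3*m, -2*s3*m, 0, 0, 0, 0;
     1/12+s3*m/2, 11/12+s3*m/4, s3/4-3*m/4, s3*m/4, 0, 0, 0, 0;
     -s3/4-3*m/2, s3/4-3*m/4, 3/4+3*s3*m/4, 9*m/4, 0, 0, 0, 0;
     -2*s3*m, s3*m/2, 9*m/2, m+3*s3*m/2+s3*m^2, 0, 0, 0, 0;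
     0, 0, 0, 0, 5/6, s3/2, 1/6, s3*m;
     0, 0, 0, 0, s3/4, 3/4+3*s3*m/4, -s3/4-9*m/4, 9*m/4;
     0, 0, 0, 0, 1/12, -s3/4-9*m/4, 11/12+9*s3*m/4, -5*s3*m/4;
     0, 0, 0, 0, s3*m, 9*m/2, -5*s3*m/2, m+3*s3*m/2+s3*m^2]

lemma H2BlockDiag_eq_reindex_fromBlocks (m : ℝ) :
    H2BlockDiag m = Matrix.reindex finSumFinEquiv finSumFinEquiv
      (Matrix.fromBlocks (symBlock m) 0 0 (antisymBlock m)) := by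
  ext i j
  fin_cases i <;> fin_cases j <;> rfl

set_option maxHeartbeats 1000000 in
lemma reflectionBasis_mul_inv : reflectionBasis * reflectionBasisInv = 1 := by
  ext i j
  fin_cases i <;> fin_cases j <;>
    norm_num [reflectionBasis, reflectionBasisInv, Matrix.mul_apply, Fin.sum_univ_succ,
      Matrix.one_apply]

set_option maxHeartbeats 1600000 in
lemma H2_mul_reflectionBasis (m : ℝ) :
    H2 m * reflectionBasis = reflectionBasis * H2BlockDiag m := by
  ext i j
  fin_cases i <;> fin_cases j <;>
    norm_num [H2, reflectionBasis, H2BlockDiag, Matrix.mul_apply, Fin.sum_univ_succ] <;> ring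

lemma charpoly_symBlock (m : ℝ) :
    (symBlock m).charpoly = X * (X ^ 3 - C (f₁ m) * X ^ 2 + C (f₂ m) * X - C (f₃ m)) := by
  refine Polynomial.funext fun x => ?_
  rw [eval_charpoly, det_fin_four]
  simp only [symBlock, f₁, f₂, f₃, scalar_apply, Matrix.sub_apply, diagonal_apply, of_apply,
    cons_val', cons_val_zero, cons_val_one, cons_val, cons_val_fin_one, Fin.reduceEq, if_true, if_false,
    eval_mul, eval_X, eval_sub, eval_add, eval_pow, eval_C]
  ring_nf
  simp only [s3_sq, s3_pow_three, s3_pow_four]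
  ring

lemma charpoly_antisymBlock (m : ℝ) :
    (antisymBlock m).charpoly = X * (X ^ 3 - C (f₁ m) * X ^ 2 + C (f₂ m) * X - C (f₃ m)) := by
  refine Polynomial.funext fun x => ?_
  rw [eval_charpoly, det_fin_four]
  simp only [antisymBlock, f₁, f₂, f₃, scalar_apply, Matrix.sub_apply, diagonal_apply, of_apply,
    cons_val', cons_val_zero, cons_val_one, cons_val, cons_val_fin_one, Fin.reduceEq, if_true, if_false,
    eval_mul, eval_X, eval_sub, eval_add, eval_pow, eval_C]
  ring_nf
  simp only [s3_sq, s3_pow_three, s3_pow_four]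
  ring

theorem H2_eigenvalues_satisfy_cubic_general (m : ℝ) :
    (H2 m).charpoly =
      X ^ 2 * (X ^ 3 - C (f₁ m) * X ^ 2 + C (f₂ m) * X - C (f₃ m)) ^ 2 := by
  rw [Matrix.charpoly_eq_of_mul_eq_mul reflectionBasis_mul_inv (H2_mul_reflectionBasis m),
    H2BlockDiag_eq_reindex_fromBlocks, Matrix.charpoly_reindex,
    Matrix.charpoly_fromBlocks_zero₁₂, charpoly_symBlock, charpoly_antisymBlock]
  ring

/-- For the triangle-plus-center configuration with central mass `m > 0`, the Hessian `H₂`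
has eigenvalue `0` with multiplicity 2, and its three nontrivial double eigenvalues
`λ₃, λ₄, λ₅` are the roots of the cubic `λ³ - f₁(m) λ² + f₂(m) λ - f₃(m) = 0`:
the characteristic polynomial of `H₂` is `X² · (X³ - f₁(m) X² + f₂(m) X - f₃(m))²`. -/
theorem H2_eigenvalues_satisfy_cubic (m : ℝ) (hm : 0 < m) :
    (H2 m).charpoly =
      X ^ 2 * (X ^ 3 - C (f₁ m) * X ^ 2 + C (f₂ m) * X - C (f₃ m)) ^ 2 :=
  H2_eigenvalues_satisfy_cubic_general m
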